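/- With H̃ = (h̃_{ij}), the Perron–Frobenius eigenvalue of the Harris–Sevastyanov transformed process equals ρ and β̃ = ρ/(ρ−1): precisely, for every real x > 1 one has m̃ ∑_{n≥1} x^{-n} g̃ H̃^n 1^t = 1 if and only if x = ρ, and β̃ := m̃ ∑_{n≥1} n ρ^{-n} g̃ H̃^n 1^t = ρ/(ρ−1). -/

import Mathlib

/-- Right action of an infinite matrix on a column vector: `(H y)_i = ∑_j H_{ij} y_j`. -/
noncomputable def matVec (H : ℕ → ℕ → ℝ) (y : ℕ → ℝ) : ℕ → ℝ := fun i => ∑' j, H i j * y j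

/-- `k`-fold right action: `(H^k y)_i`. -/
noncomputable def matPow (H : ℕ → ℕ → ℝ) : ℕ → (ℕ → ℝ) → ℕ → ℝ
  | 0, y => y
  | k + 1, y => matVec H (matPow H k y)

/-- Left action of an infinite matrix on a row vector: `(x H)_j = ∑_i x_i H_{ij}`. -/
noncomputable def vecMat (x : ℕ → ℝ) (H : ℕ → ℕ → ℝ) : ℕ → ℝ := fun j => ∑' i, x i * H i j

/-- `k`-fold left action: `(x H^k)_j`. -/
noncomputable def vecPow (x : ℕ → ℝ) (H : ℕ → ℕ → ℝ) : ℕ → ℕ → ℝ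
  | 0 => x
  | k + 1 => vecMat (vecPow x H k) H

/-- The linear-fractional generating function
`f_i(s) = h_{i0} + (∑_j h_{ij} s_j) / (1 + m - m ∑_j g_j s_j)` with `h_{i0} = 1 - ∑_j h_{ij}`. -/
noncomputable def lfGen (H : ℕ → ℕ → ℝ) (g : ℕ → ℝ) (m : ℝ) (i : ℕ) (s : ℕ → ℝ) : ℝ :=
  (1 - ∑' j, H i j) + (∑' j, H i j * s j) / (1 + m - m * ∑' j, g j * s j)

/-! Because `q` is a fixed point of `f`, the transformed matrix `H̃` is stochastic and `g̃` is a
probability vector, so `g̃ H̃ⁿ 1ᵗ = 1` for every `n`. Both series then become elementary: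
`(ρ - 1) ∑_{n ≥ 1} x⁻ⁿ = (ρ - 1)/(x - 1)` and `(ρ - 1) ∑_{n ≥ 1} n ρ⁻ⁿ = ρ/(ρ - 1)`. -/

theorem hasSum_vecMat {x : ℕ → ℝ} {P : ℕ → ℕ → ℝ} {s : ℝ} (hx0 : ∀ i, 0 ≤ x i)
    (hx : HasSum x s) (hP0 : ∀ i j, 0 ≤ P i j) (hP : ∀ i, HasSum (P i) 1) :
    HasSum (vecMat x P) s := by
  set F : ℕ × ℕ → ℝ := fun p => x p.1 * P p.1 p.2
  have hrow : ∀ i, HasSum (fun j => F (i, j)) (x i) := fun i => by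
    simpa [F] using (hP i).mul_left (x i)
  have hF : Summable F :=
    (summable_prod_of_nonneg fun p => mul_nonneg (hx0 _) (hP0 _ _)).2
      ⟨fun i => (hrow i).summable, hx.summable.congr fun i => ((hrow i).tsum_eq).symm⟩
  have hFs : HasSum F s := by
    rw [hx.unique (hF.hasSum.prod_fiberwise hrow)]
    exact hF.hasSum
  exact ((Equiv.prodComm ℕ ℕ).hasSum_iff.2 hFs).prod_fiberwise fun j =>
    (hF.prod_symm.prod_factor j).hasSum

theorem vecPow_nonneg {x : ℕ → ℝ} {P : ℕ → ℕ → ℝ} (hx0 : ∀ i, 0 ≤ x i)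
    (hP0 : ∀ i j, 0 ≤ P i j) (k j : ℕ) : 0 ≤ vecPow x P k j := by
  induction k generalizing j with
  | zero => exact hx0 j
  | succ k ih => exact tsum_nonneg fun i => mul_nonneg (ih i) (hP0 i j)

theorem hasSum_vecPow {x : ℕ → ℝ} {P : ℕ → ℕ → ℝ} {s : ℝ} (hx0 : ∀ i, 0 ≤ x i)
    (hx : HasSum x s) (hP0 : ∀ i j, 0 ≤ P i j) (hP : ∀ i, HasSum (P i) 1) (k : ℕ) :
    HasSum (vecPow x P k) s := by
  induction k with
  | zero => exact hx
  | succ k ih => exact hasSum_vecMat (vecPow_nonneg hx0 hP0 k) ih hP0 hP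

theorem tsum_inv_pow_succ {x : ℝ} (hx : 1 < x) : ∑' n : ℕ, x⁻¹ ^ (n + 1) = (x - 1)⁻¹ := by
  have hx0 : 0 < x := by linarith
  simp_rw [pow_succ', tsum_mul_left]
  rw [tsum_geometric_of_lt_one (by positivity) (inv_lt_one_of_one_lt₀ hx)]
  field_simp

theorem tsum_succ_mul_inv_pow_succ {x : ℝ} (hx : 1 < x) :
    ∑' n : ℕ, ((n : ℝ) + 1) * x⁻¹ ^ (n + 1) = x / (x - 1) ^ 2 := by
  have hx0 : 0 < x := by linarith
  have hr : ‖x⁻¹‖ < 1 := by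
    rw [Real.norm_of_nonneg (by positivity)]
    exact inv_lt_one_of_one_lt₀ hx
  have h := (hasSum_nat_add_iff' (f := fun n : ℕ => (n : ℝ) * x⁻¹ ^ n) 1).mpr
    (hasSum_coe_mul_geometric_of_norm_lt_one hr)
  simp only [Finset.sum_range_one, Nat.cast_zero, zero_mul, sub_zero, Nat.cast_add,
    Nat.cast_one] at h
  rw [h.tsum_eq]
  have : x - 1 ≠ 0 := by linarith
  field_simp

theorem hasSum_mul_sub_of_le_one {f q : ℕ → ℝ} {a : ℝ} (hf0 : ∀ j, 0 ≤ f j) (hf : HasSum f a)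
    (hq0 : ∀ j, 0 ≤ q j) (hq1 : ∀ j, q j ≤ 1) :
    HasSum (fun j => f j * (1 - q j)) (a - ∑' j, f j * q j) := by
  have hfq : Summable fun j => f j * q j :=
    hf.summable.of_nonneg_of_le (fun j => mul_nonneg (hf0 j) (hq0 j))
      fun j => mul_le_of_le_one_right (hf0 j) (hq1 j)
  simpa only [mul_one_sub] using hf.sub hfq.hasSum

noncomputable def harrisSevastyanovVec (g q : ℕ → ℝ) (m ρ : ℝ) : ℕ → ℝ :=
  fun l => m * g l * (1 - q l) / (ρ - 1)

noncomputable def harrisSevastyanovMatrix (H : ℕ → ℕ → ℝ) (g q : ℕ → ℝ) (m : ℝ) : ℕ → ℕ → ℝ :=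
  fun i j => (1 - q j) * (H i j + m * g j * (q i - (1 - ∑' l, H i l))) / (1 - q i)

section HarrisSevastyanov

variable {H : ℕ → ℕ → ℝ} {g q : ℕ → ℝ} {m ρ : ℝ}

/-- The hypothesis on `∑ g q` makes the denominator of `f_i(q)` equal to `ρ`. -/
theorem tsum_mul_eq_of_lfGen_eq {i : ℕ} (hm : m ≠ 0) (hρ : ρ ≠ 0) (hfix : lfGen H g m i q = q i)
    (hgq : ∑' j, g j * q j = (1 + m - ρ) / m) :
    ∑' j, H i j * q j = ρ * (q i - (1 - ∑' l, H i l)) := by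
  have hden : 1 + m - m * ((1 + m - ρ) / m) = ρ := by field_simp; ring
  rw [lfGen, hgq, hden] at hfix
  rw [← hfix]
  field_simp
  ring

theorem harrisSevastyanovMatrix_nonneg (hH : ∀ i j, 0 ≤ H i j) (hg : ∀ j, 0 ≤ g j)
    (hm : 0 ≤ m) (hq1 : ∀ i, q i ≤ 1) (hc : ∀ i, 0 ≤ q i - (1 - ∑' l, H i l)) (i j : ℕ) :
    0 ≤ harrisSevastyanovMatrix H g q m i j :=
  div_nonneg (mul_nonneg (sub_nonneg.2 (hq1 j))
    (add_nonneg (hH i j) (mul_nonneg (mul_nonneg hm (hg j)) (hc i)))) (sub_nonneg.2 (hq1 i))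

/-- With `cᵢ = qᵢ - h_{i0}`, row `i` of `H̃` sums to
`((Sᵢ - ρ cᵢ) + (ρ - 1) cᵢ) / (1 - qᵢ) = (Sᵢ - cᵢ) / (1 - qᵢ) = 1`, where `Sᵢ = ∑ⱼ hᵢⱼ`. -/
theorem hasSum_harrisSevastyanovMatrix (hH : ∀ i j, 0 ≤ H i j) (hHsum : ∀ i, Summable (H i))
    (hm : m ≠ 0) (hq0 : ∀ i, 0 ≤ q i) (hq1 : ∀ i, q i < 1)
    (hfix : ∀ i, ∑' j, H i j * q j = ρ * (q i - (1 - ∑' l, H i l)))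
    (hg : HasSum (fun j => g j * (1 - q j)) ((ρ - 1) / m)) (i : ℕ) :
    HasSum (harrisSevastyanovMatrix H g q m i) 1 := by
  have hrow := hasSum_mul_sub_of_le_one (hH i) (hHsum i).hasSum hq0 fun j => (hq1 j).le
  have hq : 1 - q i ≠ 0 := by linarith [hq1 i]
  have hsum : (∑' j, H i j - ∑' j, H i j * q j
      + m * (q i - (1 - ∑' l, H i l)) * ((ρ - 1) / m)) / (1 - q i) = 1 := by
    rw [hfix i]
    field_simp
    ring
  refine hsum ▸ ((hrow.add (hg.mul_left _)).div_const (1 - q i)).congr_fun fun j => ?_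
  simp only [harrisSevastyanovMatrix]
  ring

theorem harrisSevastyanovVec_nonneg (hg : ∀ j, 0 ≤ g j) (hm : 0 ≤ m) (hρ : 1 ≤ ρ)
    (hq1 : ∀ j, q j ≤ 1) (j : ℕ) : 0 ≤ harrisSevastyanovVec g q m ρ j :=
  div_nonneg (mul_nonneg (mul_nonneg hm (hg j)) (sub_nonneg.2 (hq1 j))) (sub_nonneg.2 hρ)

theorem hasSum_harrisSevastyanovVec (hm : m ≠ 0) (hρ : ρ ≠ 1)
    (hg : HasSum (fun j => g j * (1 - q j)) ((ρ - 1) / m)) :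
    HasSum (harrisSevastyanovVec g q m ρ) 1 := by
  have hρ' : ρ - 1 ≠ 0 := sub_ne_zero.2 hρ
  have hsum : m * ((ρ - 1) / m) / (ρ - 1) = 1 := by field_simp
  refine hsum ▸ ((hg.mul_left m).div_const (ρ - 1)).congr_fun fun j => ?_
  simp only [harrisSevastyanovVec]
  ring

end HarrisSevastyanov

theorem tilde_PF_and_beta_general
    (H : ℕ → ℕ → ℝ) (g q : ℕ → ℝ) (m ρ : ℝ)
    (hH : ∀ i j, 0 ≤ H i j) (hHsum : ∀ i, Summable (H i))
    (hg : ∀ j, 0 ≤ g j) (hgsum : Summable g) (hg1 : ∑' j, g j = 1)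
    (hm : 0 < m) (hρ1 : 1 < ρ)
    (hq0 : ∀ i, 0 < q i) (hq1 : ∀ i, q i < 1)
    (hfix : ∀ i, lfGen H g m i q = q i)
    (hgq : ∑' j, g j * q j = (1 + m - ρ) / m) :
    (∀ x : ℝ, 1 < x →
        ((ρ - 1) * ∑' n : ℕ, x⁻¹ ^ (n + 1)
              * ∑' j, vecPow (fun l => m * g l * (1 - q l) / (ρ - 1))
                  (fun i' j' => (1 - q j') * (H i' j' + m * g j' * (q i' - (1 - ∑' l, H i' l)))
                      / (1 - q i')) (n + 1) j
            = 1
          ↔ x = ρ))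
    ∧ (ρ - 1) * ∑' n : ℕ, ((n : ℝ) + 1) * ρ⁻¹ ^ (n + 1)
          * ∑' j, vecPow (fun l => m * g l * (1 - q l) / (ρ - 1))
              (fun i' j' => (1 - q j') * (H i' j' + m * g j' * (q i' - (1 - ∑' l, H i' l)))
                  / (1 - q i')) (n + 1) j
      = ρ / (ρ - 1) := by
  have hρ0 : 0 < ρ := by linarith
  have hfix' (i : ℕ) : ∑' j, H i j * q j = ρ * (q i - (1 - ∑' l, H i l)) :=
    tsum_mul_eq_of_lfGen_eq hm.ne' hρ0.ne' (hfix i) hgq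
  have hc (i : ℕ) : 0 ≤ q i - (1 - ∑' l, H i l) :=
    nonneg_of_mul_nonneg_right
      (hfix' i ▸ tsum_nonneg fun j => mul_nonneg (hH i j) (hq0 j).le) hρ0
  have hg1q : HasSum (fun j => g j * (1 - q j)) ((ρ - 1) / m) := by
    have h := hasSum_mul_sub_of_le_one hg (hg1 ▸ hgsum.hasSum) (fun j => (hq0 j).le)
      fun j => (hq1 j).le
    rwa [hgq, show 1 - (1 + m - ρ) / m = (ρ - 1) / m by field_simp; ring] at h
  have mass (n : ℕ) :
      ∑' j, vecPow (harrisSevastyanovVec g q m ρ) (harrisSevastyanovMatrix H g q m) n j = 1 :=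
    (hasSum_vecPow (harrisSevastyanovVec_nonneg hg hm.le hρ1.le fun j => (hq1 j).le)
      (hasSum_harrisSevastyanovVec hm.ne' hρ1.ne' hg1q)
      (harrisSevastyanovMatrix_nonneg hH hg hm.le (fun j => (hq1 j).le) hc)
      (hasSum_harrisSevastyanovMatrix hH hHsum hm.ne' (fun j => (hq0 j).le) hq1 hfix' hg1q)
      n).tsum_eq
  unfold harrisSevastyanovVec harrisSevastyanovMatrix at mass
  simp only [mass, mul_one, tsum_succ_mul_inv_pow_succ hρ1]
  refine ⟨fun x hx => ?_, ?_⟩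
  · rw [tsum_inv_pow_succ hx, ← div_eq_mul_inv, div_eq_one_iff_eq (by linarith)]
    constructor <;> intro h <;> linarith
  · have : ρ - 1 ≠ 0 := by linarith
    field_simp

/-- for the Harris–Sevastyanov transformed triplet
`(H̃, g̃, m̃)` with `m̃ = ρ-1`, `g̃_j = m g_j (1-q_j)/(ρ-1)` and
`h̃_{ij} = (1-q_j)(h_{ij} + m g_j (q_i - h_{i0}))/(1-q_i)`, the Perron–Frobenius eigenvalue is
`ρ` (i.e. for every `x > 1`, `m̃ ∑_{n≥1} x⁻ⁿ g̃ H̃^n 1^t = 1` iff `x = ρ`) and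
`β̃ := m̃ ∑_{n≥1} n ρ⁻ⁿ g̃ H̃^n 1^t = ρ/(ρ-1)`. -/
theorem tilde_PF_and_beta
    (H : ℕ → ℕ → ℝ) (g q : ℕ → ℝ) (m ρ : ℝ)
    (hH : ∀ i j, 0 ≤ H i j) (hHsum : ∀ i, Summable (H i)) (hHrow : ∀ i, ∑' j, H i j ≤ 1)
    (hg : ∀ j, 0 ≤ g j) (hgsum : Summable g) (hg1 : ∑' j, g j = 1)
    (hm : 0 < m) (hρ1 : 1 < ρ) (hρm : ρ < 1 + m)
    (hq0 : ∀ i, 0 < q i) (hq1 : ∀ i, q i < 1)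
    (hfix : ∀ i, lfGen H g m i q = q i)
    (hgq : ∑' j, g j * q j = (1 + m - ρ) / m) :
    (∀ x : ℝ, 1 < x →
        ((ρ - 1) * ∑' n : ℕ, x⁻¹ ^ (n + 1)
              * ∑' j, vecPow (fun l => m * g l * (1 - q l) / (ρ - 1))
                  (fun i' j' => (1 - q j') * (H i' j' + m * g j' * (q i' - (1 - ∑' l, H i' l)))
                      / (1 - q i')) (n + 1) j
            = 1
          ↔ x = ρ))
    ∧ (ρ - 1) * ∑' n : ℕ, ((n : ℝ) + 1) * ρ⁻¹ ^ (n + 1)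
          * ∑' j, vecPow (fun l => m * g l * (1 - q l) / (ρ - 1))
              (fun i' j' => (1 - q j') * (H i' j' + m * g j' * (q i' - (1 - ∑' l, H i' l)))
                  / (1 - q i')) (n + 1) j
      = ρ / (ρ - 1) :=
  tilde_PF_and_beta_general H g q m ρ hH hHsum hg hgsum hg1 hm hρ1 hq0 hq1 hfix hgq
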